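/- A nonempty set A ⊆ 𝔹^n is an attractor of a Boolean network f under the most permissive semantics (i.e., all configurations of A have the same set of most-permissive-reachable binary configurations, equal to A) if and only if there exists a minimal hypercube h closed by f with c(h) = A. -/

import Mathlib

inductive PState : Type
  | zero | up | down | one
deriving DecidableEq

def PState.ofBool : Bool → PState
  | false => .zero
  | true  => .one

def PState.isBool (p : PState) : Prop := p = .zero ∨ p = .one

abbrev BN (n : ℕ) := (Fin n → Bool) → Fin n → Bool

def gamma {n : ℕ} (x : Fin n → PState) : Set (Fin n → Bool) :=
  {b | ∀ i (v : Bool), x i = PState.ofBool v → b i = v}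

def mpStep {n : ℕ} (f : BN n) (x y : Fin n → PState) : Prop :=
  ∃ i : Fin n, x i ≠ y i ∧ (∀ j, j ≠ i → x j = y j) ∧
    ((y i = .up ∧ x i ≠ .one ∧ ∃ z ∈ gamma x, f z i = true) ∨
     (y i = .one ∧ x i = .up) ∨
     (y i = .down ∧ x i ≠ .zero ∧ ∃ z ∈ gamma x, f z i = false) ∨
     (y i = .zero ∧ x i = .down))

def mpReachP {n : ℕ} (f : BN n) : (Fin n → PState) → (Fin n → PState) → Prop :=
  Relation.ReflTransGen (mpStep f)

def embed {n : ℕ} (x : Fin n → Bool) : Fin n → PState := fun i => PState.ofBool (x i)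

def mpReach {n : ℕ} (f : BN n) (x : Fin n → Bool) : Set (Fin n → Bool) :=
  {y | mpReachP f (embed x) (embed y)}

def cubeSet {n : ℕ} (h : Fin n → Option Bool) : Set (Fin n → Bool) :=
  {z | ∀ i b, h i = some b → z i = b}

def smaller {n : ℕ} (h h' : Fin n → Option Bool) : Prop :=
  ∀ i b, h' i = some b → h i = some b

def kClosed {n : ℕ} (f : BN n) (K : Finset (Fin n)) (h : Fin n → Option Bool) : Prop :=
  ∀ z ∈ cubeSet h, ∀ i ∈ K, h i = none ∨ h i = some (f z i)

def closedBy {n : ℕ} (f : BN n) (h : Fin n → Option Bool) : Prop :=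
  ∀ z ∈ cubeSet h, f z ∈ cubeSet h

def smallestClosed {n : ℕ} (f : BN n) (x : Fin n → Bool) (h : Fin n → Option Bool) : Prop :=
  x ∈ cubeSet h ∧ closedBy f h ∧
    ∀ h', x ∈ cubeSet h' → closedBy f h' → smaller h h'

def minClosed {n : ℕ} (f : BN n) (h : Fin n → Option Bool) : Prop :=
  closedBy f h ∧ ∀ h', closedBy f h' → smaller h' h → h' = h

def faStep {n : ℕ} (f : BN n) (x y : Fin n → Bool) : Prop :=
  ∃ i : Fin n, x i ≠ y i ∧ (∀ j, j ≠ i → x j = y j) ∧ y i = f x i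

def aStep {n : ℕ} (f : BN n) (x y : Fin n → Bool) : Prop :=
  x ≠ y ∧ ∀ i, x i ≠ y i → y i = f x i

def mnStep {n m : ℕ} (F : (Fin n → Fin (m+1)) → Fin n → ℤ)
    (x y : Fin n → Fin (m+1)) : Prop :=
  x ≠ y ∧ ∀ i, x i ≠ y i → ((y i : ℤ) = (x i : ℤ) + F x i)

def beta {n m : ℕ} (x : Fin n → Fin (m+1)) : Set (Fin n → Bool) :=
  {b | ∀ i, ((x i : ℕ) = 0 → b i = false) ∧ ((x i : ℕ) = m → b i = true)}

def refines {n m : ℕ} (F : (Fin n → Fin (m+1)) → Fin n → ℤ) (f : BN n) : Prop :=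
  ∀ x i, (F x i > 0 → ∃ b ∈ beta x, f b i = true) ∧
         (F x i < 0 → ∃ b ∈ beta x, f b i = false)

def alpha {n m : ℕ} (x : Fin n → Fin (m+1)) : Set (Fin n → PState) :=
  {p | ∀ i, ((x i : ℕ) = 0 ↔ p i = .zero) ∧ ((x i : ℕ) = m ↔ p i = .one)}

def bdStep {n : ℕ} (f : BN n) (L : Finset (Fin n)) (a b : Fin n → PState) : Prop :=
  mpStep f a b ∧ ∃ j, a j ≠ b j ∧ j ∉ L ∧ (a j).isBool ∧ ¬ (b j).isBool

def exhaustive {n : ℕ} (f : BN n) (x : Fin n → Bool) (L : Finset (Fin n))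
    (zhat : Fin n → PState) : Prop :=
  Relation.ReflTransGen (bdStep f L) (embed x) zhat ∧ ∀ z', ¬ bdStep f L zhat z'

/-!
A closed hypercube `h` traps the most permissive dynamics: a coordinate fixed by `h` can never
start to move, since `f` keeps it fixed on all of `c(h)`. Conversely, let `h` be minimal among the
closed hypercubes containing `x`, and suppose that for every free coordinate `i` of `h` both values
of `f_i` occur on `c(h)`. Starting from `x`, as long as some free coordinate is still Boolean, the
subcube of the Boolean coordinates is not closed, so one of them can be set in motion; once every
free coordinate moves, the context `γ` is all of `c(h)`, so each moving coordinate can be turned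
towards any target value and then settled. Hence `c(h)` is exactly the set reachable from each of
its points. A minimal trap space satisfies these hypotheses at each of its points; for an attractor
`A` and `x ∈ A`, a minimal closed hypercube around `x` satisfies them because the dynamics can
always return to `x`, so its configurations are `A`, which in turn forces it to be minimal.
-/

open Function

lemma exists_reflTransGen_mem_of_descent {α : Type*} {r : α → α → Prop} {S G : Set α} (μ : α → ℕ)
    (hdesc : ∀ a ∈ S, a ∉ G → ∃ b ∈ S, r a b ∧ μ b < μ a) {a : α} (ha : a ∈ S) :
    ∃ b ∈ G, Relation.ReflTransGen r a b := by
  induction hm : μ a using Nat.strong_induction_on generalizing a with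
  | _ m ih =>
    by_cases haG : a ∈ G
    · exact ⟨a, haG, .refl⟩
    obtain ⟨b, hbS, hab, hlt⟩ := hdesc a ha haG
    obtain ⟨c, hcG, hbc⟩ := ih (μ b) (hm ▸ hlt) hbS rfl
    exact ⟨c, hcG, .head hab hbc⟩

lemma ncard_setOf_update_lt {ι β : Type*} [Finite ι] [DecidableEq ι] (P : ι → β → Prop)
    {g : ι → β} {i : ι} {b : β} (hi : P i (g i)) (hb : ¬ P i b) :
    {j | P j (update g i b j)}.ncard < {j | P j (g j)}.ncard := by
  refine Set.ncard_lt_ncard ?_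
  refine (Set.ssubset_iff_of_subset fun j hj => ?_).2 ⟨i, hi, by simpa using hb⟩
  by_cases hji : j = i
  · subst hji; simp_all
  · simpa [update_of_ne hji] using hj

lemma reflTransGen_of_forall_update {ι β : Type*} [Finite ι] [DecidableEq ι]
    {r : (ι → β) → (ι → β) → Prop} {S : Set (ι → β)} {t : ι → β}
    (hstep : ∀ p ∈ S, ∀ i, p i ≠ t i → update p i (t i) ∈ S ∧ r p (update p i (t i)))
    {p : ι → β} (hp : p ∈ S) : Relation.ReflTransGen r p t := by
  have hdesc : ∀ p ∈ S, p ∉ ({t} : Set (ι → β)) →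
      ∃ q ∈ S, r p q ∧ {i | q i ≠ t i}.ncard < {i | p i ≠ t i}.ncard := fun p hp hpt => by
    obtain ⟨i, hi⟩ := Function.ne_iff.1 hpt
    exact ⟨_, (hstep p hp i hi).1, (hstep p hp i hi).2,
      ncard_setOf_update_lt (fun j b => b ≠ t j) hi (by simp)⟩
  obtain ⟨q, rfl, hq⟩ := exists_reflTransGen_mem_of_descent _ hdesc hp
  exact hq

namespace PState

def toOption : PState → Option Bool
  | .zero => some false
  | .one => some true
  | _ => none

def toward : Bool → PState
  | false => .down
  | true => .up

@[simp] lemma toOption_ofBool (b : Bool) : (ofBool b).toOption = some b := by cases b <;> rfl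

@[simp] lemma toOption_toward (b : Bool) : (toward b).toOption = none := by cases b <;> rfl

lemma toOption_eq_some_iff {p : PState} {b : Bool} : p.toOption = some b ↔ p = ofBool b := by
  cases p <;> cases b <;> decide

lemma ofBool_injective : Injective ofBool := by
  intro a b; cases a <;> cases b <;> decide

@[simp] lemma ofBool_inj {a b : Bool} : ofBool a = ofBool b ↔ a = b := ofBool_injective.eq_iff

@[simp] lemma toward_ne_ofBool (a b : Bool) : toward a ≠ ofBool b := by
  cases a <;> cases b <;> decide

@[simp] lemma ofBool_ne_toward (a b : Bool) : ofBool a ≠ toward b := (toward_ne_ofBool b a).symm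

@[simp] lemma toward_inj {a b : Bool} : toward a = toward b ↔ a = b := by
  cases a <;> cases b <;> decide

lemma exists_eq_toward_of_toOption_eq {p q : PState} (h : p.toOption = q.toOption)
    (hne : p ≠ q) : ∃ v, p = toward (!v) ∧ q = toward v := by
  cases p <;> cases q <;> revert h hne <;> decide

end PState

open PState

variable {n : ℕ} {f : BN n}

def cubeOf (p : Fin n → PState) : Fin n → Option Bool := PState.toOption ∘ p

lemma gamma_eq_cubeSet_cubeOf (p : Fin n → PState) : gamma p = cubeSet (cubeOf p) := by
  ext z
  simp [gamma, cubeSet, cubeOf, toOption_eq_some_iff]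

lemma self_mem_gamma_embed (x : Fin n → Bool) : x ∈ gamma (embed x) :=
  fun _ _ hv => ofBool_injective hv

lemma smaller_cubeOf_embed_iff {x : Fin n → Bool} {h : Fin n → Option Bool} :
    smaller (cubeOf (embed x)) h ↔ x ∈ cubeSet h := by
  simp [smaller, cubeOf, embed, cubeSet]

lemma cubeSet_mono {h h' : Fin n → Option Bool} (hsm : smaller h h') : cubeSet h ⊆ cubeSet h' :=
  fun _ hz i b hb => hz i b (hsm i b hb)

lemma cubeSet_nonempty (h : Fin n → Option Bool) : (cubeSet h).Nonempty :=
  ⟨fun i => (h i).getD false, fun i b hb => by simp [hb]⟩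

lemma smaller_update_some {h : Fin n → Option Bool} {i : Fin n} (hi : h i = none) (b : Bool) :
    smaller (update h i (some b)) h := by
  intro j c hc
  rwa [update_of_ne (by rintro rfl; simp [hi] at hc)]

lemma smaller_update_none (h : Fin n → Option Bool) (i : Fin n) : smaller h (update h i none) := by
  intro j c hc
  by_cases hji : j = i
  · subst hji; simp at hc
  · simpa [update_of_ne hji] using hc

lemma mem_cubeSet_update_some {h : Fin n → Option Bool} {i : Fin n} (hi : h i = none)
    {b : Bool} {z : Fin n → Bool} : z ∈ cubeSet (update h i (some b)) ↔ z ∈ cubeSet h ∧ z i = b := by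
  refine ⟨fun hz => ⟨cubeSet_mono (smaller_update_some hi b) hz, hz i b (by simp)⟩,
    fun ⟨hz, hzi⟩ j c hc => ?_⟩
  by_cases hji : j = i
  · subst hji; simp_all
  · exact hz j c (by simpa [update_of_ne hji] using hc)

lemma eq_of_smaller_of_ncard_le {h h' : Fin n → Option Bool} (hsm : smaller h' h)
    (hle : {i | h i = none}.ncard ≤ {i | h' i = none}.ncard) : h' = h := by
  have hsub : {i | h' i = none} ⊆ {i | h i = none} := fun i hi => by
    cases hhi : h i with
    | none => exact hhi
    | some b => simp [hsm i b hhi] at hi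
  have heq := Set.eq_of_subset_of_ncard_le hsub hle
  funext i
  cases hhi : h i with
  | none => exact (heq ▸ hhi : i ∈ {i | h' i = none})
  | some b => exact hsm i b hhi

def minClosedAt (f : BN n) (x : Fin n → Bool) (h : Fin n → Option Bool) : Prop :=
  x ∈ cubeSet h ∧ closedBy f h ∧ ∀ h', closedBy f h' → smaller h' h → x ∈ cubeSet h' → h' = h

lemma exists_minClosedAt (f : BN n) (x : Fin n → Bool) : ∃ h, minClosedAt f x h := by
  obtain ⟨h, ⟨hcl, hx⟩, hmin⟩ := Set.exists_min_image {h | closedBy f h ∧ x ∈ cubeSet h}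
    (fun h => {i | h i = none}.ncard) (Set.toFinite _)
    ⟨fun _ => none, fun _ _ _ _ hb => by simp at hb, fun _ _ hb => by simp at hb⟩
  exact ⟨h, hx, hcl, fun h' hcl' hsm hx' => eq_of_smaller_of_ncard_le hsm (hmin h' ⟨hcl', hx'⟩)⟩

lemma minClosed.minClosedAt {h : Fin n → Option Bool} (hm : minClosed f h) {x : Fin n → Bool}
    (hx : x ∈ cubeSet h) : minClosedAt f x h :=
  ⟨hx, hm.1, fun h' hcl' hsm _ => hm.2 h' hcl' hsm⟩

lemma exists_free_of_not_closedBy {h h' : Fin n → Option Bool} (hcl : closedBy f h)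
    (hsm : smaller h' h) (hncl : ¬ closedBy f h') :
    ∃ z ∈ cubeSet h', ∃ j b, h j = none ∧ h' j = some b ∧ f z j = !b := by
  simp only [closedBy, cubeSet, Set.mem_ofPred_eq, not_forall] at hncl
  obtain ⟨z, hz, j, b, hjb, hfz⟩ := hncl
  refine ⟨z, hz, j, b, ?_, hjb, Bool.eq_not.2 hfz⟩
  cases hhj : h j with
  | none => rfl
  | some c =>
    obtain rfl : c = b := by simpa [hsm j c hhj] using hjb
    exact absurd (hcl z (cubeSet_mono hsm hz) j c hhj) hfz

lemma minClosed.exists_apply_eq {h : Fin n → Option Bool} (hm : minClosed f h) {i : Fin n}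
    (hi : h i = none) (v : Bool) : ∃ z ∈ cubeSet h, f z i = v := by
  have hsm := smaller_update_some hi (!v)
  have hncl : ¬ closedBy f (update h i (some !v)) := fun hcl => by
    simpa [hi] using congrFun (hm.2 _ hcl hsm) i
  obtain ⟨z, hz, j, b, hj, hjb, hfz⟩ := exists_free_of_not_closedBy hm.1 hsm hncl
  obtain rfl : j = i := by
    by_contra hji
    simp [update_of_ne hji, hj] at hjb
  obtain rfl : b = !v := by simpa using hjb.symm
  exact ⟨z, cubeSet_mono hsm hz, by simpa using hfz⟩

lemma mpStep_update_toward {p : Fin n → PState} {i : Fin n} {v : Bool} {z : Fin n → Bool}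
    (h₁ : p i ≠ ofBool v) (h₂ : p i ≠ toward v) (hz : z ∈ gamma p) (hfz : f z i = v) :
    mpStep f p (update p i (toward v)) := by
  refine ⟨i, by simpa using h₂, fun j hj => (update_of_ne hj _ _).symm, ?_⟩
  cases v
  · exact .inr <| .inr <| .inl ⟨by simp [toward], h₁, z, hz, hfz⟩
  · exact .inl ⟨by simp [toward], h₁, z, hz, hfz⟩

lemma mpStep_update_ofBool {p : Fin n → PState} {i : Fin n} {v : Bool} (h : p i = toward v) :
    mpStep f p (update p i (ofBool v)) := by
  refine ⟨i, by simp [h], fun j hj => (update_of_ne hj _ _).symm, ?_⟩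
  cases v
  · exact .inr <| .inr <| .inr ⟨by simp [ofBool], h⟩
  · exact .inr <| .inl ⟨by simp [ofBool], h⟩

lemma mpStep.smaller_cubeOf {h : Fin n → Option Bool} (hcl : closedBy f h)
    {p q : Fin n → PState} (hpq : mpStep f p q) (hp : smaller (cubeOf p) h) :
    smaller (cubeOf q) h := by
  obtain ⟨i, -, hother, hmove⟩ := hpq
  intro j b hb
  by_cases hji : j = i
  · subst hji
    have hpj : p j = ofBool b := toOption_eq_some_iff.1 (hp j b hb)
    have hf : ∀ z ∈ gamma p, f z j = b := fun z hz =>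
      hcl z (cubeSet_mono hp (gamma_eq_cubeSet_cubeOf p ▸ hz)) j b hb
    exfalso
    rcases hmove with ⟨-, h₁, z, hz, hfz⟩ | ⟨-, h₁⟩ | ⟨-, h₁, z, hz, hfz⟩ | ⟨-, h₁⟩ <;>
      cases b <;> simp_all [ofBool]
  · simpa [cubeOf, ← hother j hji] using hp j b hb

lemma mpReachP.smaller_cubeOf {h : Fin n → Option Bool} (hcl : closedBy f h)
    {p q : Fin n → PState} (hpq : mpReachP f p q) (hp : smaller (cubeOf p) h) :
    smaller (cubeOf q) h := by
  induction hpq with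
  | refl => exact hp
  | tail _ hstep ih => exact hstep.smaller_cubeOf hcl ih

lemma mpReach_subset_cubeSet {h : Fin n → Option Bool} (hcl : closedBy f h)
    {x : Fin n → Bool} (hx : x ∈ cubeSet h) : mpReach f x ⊆ cubeSet h := fun _ hy =>
  smaller_cubeOf_embed_iff.1 (mpReachP.smaller_cubeOf hcl hy (smaller_cubeOf_embed_iff.2 hx))

lemma minClosedAt.exists_mpReachP_cubeOf_eq {x : Fin n → Bool} {h : Fin n → Option Bool}
    (hm : minClosedAt f x h) : ∃ q, mpReachP f (embed x) q ∧ cubeOf q = h := by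
  have hdesc : ∀ p ∈ {p | smaller (cubeOf p) h ∧ x ∈ gamma p}, p ∉ {p | cubeOf p = h} →
      ∃ q ∈ {p | smaller (cubeOf p) h ∧ x ∈ gamma p}, mpStep f p q ∧
        {i | (cubeOf q i).isSome}.ncard < {i | (cubeOf p i).isSome}.ncard := by
    rintro p ⟨hsm, hx⟩ hne
    have hncl : ¬ closedBy f (cubeOf p) := fun hcl =>
      hne (hm.2.2 _ hcl hsm (gamma_eq_cubeSet_cubeOf p ▸ hx))
    obtain ⟨z, hz, j, b, hj, hjb, hfz⟩ := exists_free_of_not_closedBy hm.2.1 hsm hncl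
    have hpj : p j = ofBool b := toOption_eq_some_iff.1 hjb
    have hcube : cubeOf (update p j (toward !b)) = update (cubeOf p) j none := by
      simp [cubeOf, comp_update]
    refine ⟨update p j (toward !b), ⟨?_, ?_⟩, ?_, ?_⟩
    · rw [hcube]
      intro i c hc
      rw [update_of_ne (by rintro rfl; simp [hj] at hc)]
      exact hsm i c hc
    · rw [gamma_eq_cubeSet_cubeOf, hcube]
      exact cubeSet_mono (smaller_update_none _ j) (gamma_eq_cubeSet_cubeOf p ▸ hx)
    · exact mpStep_update_toward (by simp [hpj]) (by simp [hpj])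
        (gamma_eq_cubeSet_cubeOf p ▸ hz) hfz
    · rw [hcube]
      exact ncard_setOf_update_lt (fun _ (o : Option Bool) => o.isSome) (by simp [hjb]) (by simp)
  obtain ⟨q, hq, hxq⟩ := exists_reflTransGen_mem_of_descent _ hdesc
    ⟨smaller_cubeOf_embed_iff.2 hm.1, self_mem_gamma_embed x⟩
  exact ⟨q, hxq, hq⟩

lemma mpReachP_of_cubeOf_eq {h : Fin n → Option Bool}
    (hfree : ∀ i, h i = none → ∀ v, ∃ z ∈ cubeSet h, f z i = v)
    {p q : Fin n → PState} (hp : cubeOf p = h) (hq : cubeOf q = h) : mpReachP f p q := by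
  refine reflTransGen_of_forall_update (S := {s | cubeOf s = h}) (fun s hs i hi => ?_) hp
  have hsq : (s i).toOption = (q i).toOption := congrFun (hs.trans hq.symm) i
  obtain ⟨v, hsi, hqi⟩ := exists_eq_toward_of_toOption_eq hsq hi
  have hhi : h i = none := by simp [← hq, cubeOf, hqi]
  obtain ⟨z, hz, hfz⟩ := hfree i hhi v
  refine ⟨?_, ?_⟩
  · show cubeOf _ = h
    rw [cubeOf, comp_update, ← hsq]
    exact (update_eq_self i _).trans hs
  · rw [hqi]
    exact mpStep_update_toward (by simp [hsi]) (by simp [hsi])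
      (by rw [gamma_eq_cubeSet_cubeOf, hs]; exact hz) hfz

lemma mpReachP_embed_of_forall {p : Fin n → PState} {y : Fin n → Bool}
    (hp : ∀ i, p i = embed y i ∨ p i = toward (y i)) : mpReachP f p (embed y) := by
  refine reflTransGen_of_forall_update (S := {s | ∀ i, s i = embed y i ∨ s i = toward (y i)})
    (fun s hs i hi => ⟨fun j => ?_, mpStep_update_ofBool ((hs i).resolve_left hi)⟩) hp
  by_cases hji : j = i
  · subst hji; simp [embed]
  · simpa [update_of_ne hji] using hs j

lemma minClosedAt.cubeSet_subset_mpReach {x : Fin n → Bool} {h : Fin n → Option Bool}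
    (hm : minClosedAt f x h) (hfree : ∀ i, h i = none → ∀ v, ∃ z ∈ cubeSet h, f z i = v) :
    cubeSet h ⊆ mpReach f x := by
  intro y hy
  obtain ⟨q, hxq, hq⟩ := hm.exists_mpReachP_cubeOf_eq
  let t : Fin n → PState := fun i => if h i = none then toward (y i) else embed y i
  have ht : cubeOf t = h := by
    funext i
    cases hhi : h i with
    | none => simp [t, cubeOf, hhi]
    | some b => simp [t, cubeOf, hhi, embed, hy i b hhi]
  have hty : ∀ i, t i = embed y i ∨ t i = toward (y i) := fun i => by
    by_cases hhi : h i = none <;> simp [t, hhi]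
  exact (hxq.trans (mpReachP_of_cubeOf_eq hfree hq ht)).trans (mpReachP_embed_of_forall hty)

lemma update_mem_mpReach {x : Fin n → Bool} {i : Fin n} {v : Bool} (hfx : f x i = v) :
    update x i v ∈ mpReach f x := by
  by_cases hxi : x i = v
  · rw [← hxi, update_eq_self]
    exact .refl
  have hembed : embed (update x i v) = update (update (embed x) i (toward v)) i (ofBool v) := by
    rw [update_idem]
    exact comp_update ofBool x i v
  show mpReachP f (embed x) (embed (update x i v))
  rw [hembed]
  exact .head (mpStep_update_toward (by simpa [embed] using hxi) (by simp [embed])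
    (self_mem_gamma_embed x) hfx) (.single (mpStep_update_ofBool (update_self ..)))

/-- If `f z i` were `!v` throughout `h`, the half of `h` where `x i = !v` would be closed; `x`
reaches it in two steps and could not come back. -/
lemma minClosedAt.exists_apply_eq {x : Fin n → Bool} {h : Fin n → Option Bool}
    (hm : minClosedAt f x h) (hback : ∀ y ∈ mpReach f x, x ∈ mpReach f y) {i : Fin n}
    (hi : h i = none) (v : Bool) : ∃ z ∈ cubeSet h, f z i = v := by
  by_contra! hne
  have hcl' : closedBy f (update h i (some !v)) := fun z hz => by
    rw [mem_cubeSet_update_some hi] at hz ⊢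
    exact ⟨hm.2.1 z hz.1, Bool.eq_not.2 (hne z hz.1)⟩
  have hx' : x ∈ cubeSet (update h i (some !v)) := by
    by_contra hx'
    have hy : update x i (!v) ∈ cubeSet (update h i (some !v)) := by
      refine (mem_cubeSet_update_some hi).2 ⟨fun j c hc => ?_, update_self ..⟩
      rw [update_of_ne (by rintro rfl; simp [hi] at hc)]
      exact hm.1 j c hc
    exact hx' (mpReach_subset_cubeSet hcl' hy
      (hback _ (update_mem_mpReach (Bool.eq_not.2 (hne x hm.1)))))
  simpa [hi] using congrFun (hm.2.2 _ hcl' (smaller_update_some hi _) hx') i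

theorem stmt9 {n : ℕ} (f : BN n) (A : Set (Fin n → Bool)) :
    (A.Nonempty ∧ ∀ x ∈ A, mpReach f x = A) ↔
      ∃ h : Fin n → Option Bool, minClosed f h ∧ cubeSet h = A := by
  constructor
  · rintro ⟨⟨x, hxA⟩, hA⟩
    obtain ⟨h, hm⟩ := exists_minClosedAt f x
    have hback : ∀ y ∈ mpReach f x, x ∈ mpReach f y := fun y hy => by
      rw [hA x hxA] at hy
      rwa [hA y hy]
    have hhA : cubeSet h = A := hA x hxA ▸ (hm.cubeSet_subset_mpReach
      (fun i hi v => hm.exists_apply_eq hback hi v)).antisymm (mpReach_subset_cubeSet hm.2.1 hm.1)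
    refine ⟨h, ⟨hm.2.1, fun h' hcl' hsm => ?_⟩, hhA⟩
    obtain ⟨y, hy⟩ := cubeSet_nonempty h'
    have hyA : y ∈ A := hhA ▸ cubeSet_mono hsm hy
    exact hm.2.2 h' hcl' hsm (mpReach_subset_cubeSet hcl' hy (hA y hyA ▸ hxA))
  · rintro ⟨h, hm, rfl⟩
    exact ⟨cubeSet_nonempty h, fun x hx => (mpReach_subset_cubeSet hm.1 hx).antisymm
      ((hm.minClosedAt hx).cubeSet_subset_mpReach fun i hi v => hm.exists_apply_eq hi v)⟩
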